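/- For two binary spreading sequences λ_0, λ_1 : Fin N_c → {-1,1}, the normalization constant C_{(1+1)} := (1/(4N_c²))·[Σ_{k_0 < k_1} (λ_{1,k_0}λ_{0,k_0} + λ_{1,k_1}λ_{0,k_1})² + Σ_k (√2 · λ_{1,k}λ_{0,k})²] equals (1/4)·(1 + |⟨Λ_0, Λ_1⟩|²), where ⟨Λ_0, Λ_1⟩ := (1/N_c) Σ_k λ_{0,k} λ_{1,k}. -/

import Mathlib

/-- Splitting a sum over all pairs into `<`, `>`, and diagonal parts. -/
lemma pair_sum_split {n : ℕ} (g : Fin n → Fin n → ℝ) :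
    (∑ p ∈ Finset.univ.filter (fun p : Fin n × Fin n => p.1 < p.2), g p.1 p.2)
      + (∑ p ∈ Finset.univ.filter (fun p : Fin n × Fin n => p.2 < p.1), g p.1 p.2)
      + (∑ k, g k k) = ∑ a, ∑ b, g a b := by
  classical
  have htot : ∑ a, ∑ b, g a b = ∑ p : Fin n × Fin n, g p.1 p.2 := by
    rw [← Finset.sum_product']
    rfl
  rw [htot]
  rw [← Finset.sum_filter_add_sum_filter_not Finset.univ
    (fun p : Fin n × Fin n => p.1 < p.2) (fun p => g p.1 p.2)]
  rw [← Finset.sum_filter_add_sum_filter_not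
    (Finset.univ.filter (fun p : Fin n × Fin n => ¬ p.1 < p.2))
    (fun p : Fin n × Fin n => p.2 < p.1) (fun p => g p.1 p.2)]
  rw [Finset.filter_filter, Finset.filter_filter]
  have h1 : (Finset.univ.filter fun p : Fin n × Fin n => ¬p.1 < p.2 ∧ p.2 < p.1)
      = Finset.univ.filter (fun p : Fin n × Fin n => p.2 < p.1) := by
    apply Finset.filter_congr; intro p _
    constructor
    · exact fun h => h.2
    · exact fun h => ⟨not_lt.mpr (le_of_lt h), h⟩
  have h2 : (∑ p ∈ Finset.univ.filter
      (fun p : Fin n × Fin n => ¬p.1 < p.2 ∧ ¬p.2 < p.1), g p.1 p.2) = ∑ k, g k k := by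
    apply Finset.sum_nbij' (fun p : Fin n × Fin n => p.1) (fun k : Fin n => (k, k))
    · intro p hp; simp
    · intro k _
      simp only [Finset.mem_filter, Finset.mem_univ, true_and]
      exact ⟨lt_irrefl _, lt_irrefl _⟩
    · intro p hp
      simp only [Finset.mem_filter, Finset.mem_univ, true_and] at hp
      have : p.1 = p.2 := le_antisymm (not_lt.mp hp.2) (not_lt.mp hp.1)
      exact Prod.ext rfl this
    · intro k _; rfl
    · intro p hp
      simp only [Finset.mem_filter, Finset.mem_univ, true_and] at hp
      have : p.1 = p.2 := le_antisymm (not_lt.mp hp.2) (not_lt.mp hp.1)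
      rw [← this]
  rw [h1, h2, add_assoc]

lemma pair_swap_sum {n : ℕ} (g : Fin n → Fin n → ℝ) :
    (∑ p ∈ Finset.univ.filter (fun p : Fin n × Fin n => p.2 < p.1), g p.1 p.2)
      = ∑ p ∈ Finset.univ.filter (fun p : Fin n × Fin n => p.1 < p.2), g p.2 p.1 := by
  apply Finset.sum_nbij' (fun p : Fin n × Fin n => Prod.swap p)
    (fun p : Fin n × Fin n => Prod.swap p) <;> intro p hp <;> simp_all

/-- The two-photon normalization constant
`C_{(1+1)} = (1/(4N_c²))·[Σ_{k₀<k₁}(λ_{1,k₀}λ_{0,k₀}+λ_{1,k₁}λ_{0,k₁})²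
 + Σ_k (√2·λ_{1,k}λ_{0,k})²]` equals `(1/4)(1+|⟨Λ₀,Λ₁⟩|²)` with
`⟨Λ₀,Λ₁⟩ = (1/N_c) Σ_k λ_{0,k} λ_{1,k}`. -/
theorem two_photon_normalization_constant
    (Nc : ℕ) (hNc : 0 < Nc)
    (lam0 lam1 : Fin Nc → ℝ)
    (h0 : ∀ k, lam0 k = 1 ∨ lam0 k = -1)
    (h1 : ∀ k, lam1 k = 1 ∨ lam1 k = -1)
    (corr : ℝ) (hcorr : corr = (1 / (Nc : ℝ)) * ∑ k, lam0 k * lam1 k) :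
    (1 / (4 * (Nc : ℝ) ^ 2)) *
      ((∑ p ∈ Finset.univ.filter (fun p : Fin Nc × Fin Nc => p.1 < p.2),
          (lam1 p.1 * lam0 p.1 + lam1 p.2 * lam0 p.2) ^ 2)
        + ∑ k, (Real.sqrt 2 * (lam1 k * lam0 k)) ^ 2)
      = (1 / 4) * (1 + |corr| ^ 2) := by
  set μ : Fin Nc → ℝ := fun k => lam1 k * lam0 k with hμdef
  have hμ2 : ∀ k, μ k ^ 2 = 1 := by
    intro k
    rcases h0 k with h | h <;> rcases h1 k with h' | h' <;> simp [hμdef, h, h']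
  set S : ℝ := ∑ k, μ k with hS
  set T : ℝ := ∑ p ∈ Finset.univ.filter (fun p : Fin Nc × Fin Nc => p.1 < p.2),
      (μ p.1 + μ p.2) ^ 2 with hT
  have hsplit := pair_sum_split (fun a b => (μ a + μ b) ^ 2)
  have hswap := pair_swap_sum (fun a b => (μ a + μ b) ^ 2)
  have hswap' : (∑ p ∈ Finset.univ.filter (fun p : Fin Nc × Fin Nc => p.2 < p.1),
      (μ p.1 + μ p.2) ^ 2) = T := by
    rw [hswap]; apply Finset.sum_congr rfl; intro p _; ring
  have hdiag : (∑ k : Fin Nc, (μ k + μ k) ^ 2) = 4 * Nc := by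
    have h : ∀ k ∈ Finset.univ, (μ k + μ k) ^ 2 = (4 : ℝ) := by
      intro k _; have := hμ2 k; nlinarith
    rw [Finset.sum_congr rfl h, Finset.sum_const, Finset.card_univ, Fintype.card_fin,
      nsmul_eq_mul, mul_comm]
  have hrhs : (∑ a : Fin Nc, ∑ b : Fin Nc, (μ a + μ b) ^ 2) = 2 * Nc ^ 2 + 2 * S ^ 2 := by
    have inner : ∀ a ∈ (Finset.univ : Finset (Fin Nc)),
        (∑ b : Fin Nc, (μ a + μ b) ^ 2) = (Nc : ℝ) + 2 * S * μ a + Nc := by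
      intro a _
      have h : ∀ b ∈ (Finset.univ : Finset (Fin Nc)),
          (μ a + μ b) ^ 2 = 1 + 2 * μ b * μ a + 1 := by
        intro b _
        have ha := hμ2 a; have hb := hμ2 b
        nlinarith
      have h2 : (∑ b : Fin Nc, 2 * μ b * μ a) = 2 * S * μ a := by
        rw [← Finset.sum_mul, ← Finset.mul_sum, ← hS]
      rw [Finset.sum_congr rfl h, Finset.sum_add_distrib, Finset.sum_add_distrib, h2,
        Finset.sum_const, Finset.card_univ, Fintype.card_fin, nsmul_eq_mul, mul_one]
    have h3 : (∑ a : Fin Nc, 2 * S * μ a) = 2 * S * S := by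
      rw [← Finset.mul_sum, ← hS]
    rw [Finset.sum_congr rfl inner, Finset.sum_add_distrib, Finset.sum_add_distrib, h3,
      Finset.sum_const, Finset.card_univ, Fintype.card_fin, nsmul_eq_mul]
    ring
  have hT_eq : T = Nc ^ 2 + S ^ 2 - 2 * Nc := by
    have h := hsplit
    rw [hswap'] at h
    rw [hdiag, hrhs] at h
    simp only [← hT] at h
    linarith
  have hsec : (∑ k, (Real.sqrt 2 * μ k) ^ 2) = 2 * Nc := by
    have h : ∀ k ∈ (Finset.univ : Finset (Fin Nc)), (Real.sqrt 2 * μ k) ^ 2 = (2 : ℝ) := by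
      intro k _
      rw [mul_pow, Real.sq_sqrt (by norm_num : (0:ℝ) ≤ 2), hμ2 k, mul_one]
    rw [Finset.sum_congr rfl h, Finset.sum_const, Finset.card_univ, Fintype.card_fin,
      nsmul_eq_mul, mul_comm]
  have hcorr' : corr = S / Nc := by
    rw [hcorr]
    have h : (∑ k, lam0 k * lam1 k) = S := by
      rw [hS]; apply Finset.sum_congr rfl; intro k _; rw [hμdef]; ring
    rw [h]; ring
  have hNc' : (Nc : ℝ) ≠ 0 := by positivity
  rw [hT_eq, hsec, sq_abs, hcorr']
  field_simp
  ring
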